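/- arXiv:2402.06538 — 2 statements merged into one kernel-verified Lean document; each statement's English description precedes it below -/
import Mathlib

section
/- Dynamic programming recurrence for Demand-TF: For a tournament T, demand set S ⊆ A(T), a vertex set W ⊆ V(T) with |W| = 2^p for p > 0 and x ∈ W, there exists a seeding of W such that the resulting single-elimination tournament (with results given by T) is won by x and plays every demand match with both endpoints in W, if and only if there is a partition of W into two sets W_1, W_2 of size 2^{p-1} each with x ∈ W_1, and a vertex y ∈ W_2, such that: (a) x wins an SE tournament on W_1 playing all demand matches inside W_1; (b) y wins an SE tournament on W_2 playing all demand matches inside W_2; (c) (x,y) ∈ A(T); and (d) the only arc of S with one endpoint in W_1 and the other in W_2, if any, is (x,y). -/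
universe u

/-- A single-elimination bracket: a full binary tree with players at the leaves. -/
inductive SEBracket (V : Type u) where
  | leaf : V → SEBracket V
  | node : SEBracket V → SEBracket V → SEBracket V

namespace SEBracket

variable {V : Type*}

/-- The winner of the single-elimination tournament given by a bracket,
where `A a b` means `a` beats `b`. -/
def winner (A : V → V → Prop) [DecidableRel A] : SEBracket V → V
  | .leaf v => v
  | .node l r =>
    let a := winner A l
    let b := winner A r
    if A a b then a else b

/-- The set of (winner, loser) pairs of the matches played in the
single-elimination tournament given by a bracket. -/
def played [DecidableEq V] (A : V → V → Prop) [DecidableRel A] : SEBracket V → Finset (V × V)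
  | .leaf _ => ∅
  | .node l r =>
    let a := winner A l
    let b := winner A r
    insert (if A a b then (a, b) else (b, a)) (played A l ∪ played A r)

/-- The multiset of players placed at the leaves of a bracket. -/
def players : SEBracket V → Multiset V
  | .leaf v => {v}
  | .node l r => players l + players r

/-- A bracket is balanced of depth `n` if all leaves are at depth exactly `n`. -/
def balanced : SEBracket V → ℕ → Prop
  | .leaf _, n => n = 0
  | .node l r, n => ∃ m, n = m + 1 ∧ balanced l m ∧ balanced r m

end SEBracket

namespace SEBracket

variable {V : Type*} (A : V → V → Prop) [DecidableRel A]

lemma winner_mem_players : ∀ B : SEBracket V, B.winner A ∈ B.players := by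
  intro B
  induction B with
  | leaf v => simp [winner, players]
  | node l r hl hr =>
    simp only [winner, players, Multiset.mem_add]
    split
    · exact Or.inl hl
    · exact Or.inr hr

lemma played_mem [DecidableEq V] : ∀ B : SEBracket V, ∀ e ∈ B.played A,
    e.1 ∈ B.players ∧ e.2 ∈ B.players := by
  intro B
  induction B with
  | leaf v => simp [played]
  | node l r hl hr =>
    intro e he
    simp only [played, Finset.mem_insert, Finset.mem_union] at he
    simp only [players, Multiset.mem_add]
    rcases he with he | he | he
    · have ha := winner_mem_players A l
      have hb := winner_mem_players A r
      split at he <;> subst he <;> exact ⟨by simp [*], by simp [*]⟩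
    · exact ⟨Or.inl (hl e he).1, Or.inl (hl e he).2⟩
    · exact ⟨Or.inr (hr e he).1, Or.inr (hr e he).2⟩

lemma card_players : ∀ (B : SEBracket V) (n : ℕ), B.balanced n →
    Multiset.card B.players = 2 ^ n := by
  intro B
  induction B with
  | leaf v => intro n hn; simp [balanced] at hn; simp [players, hn]
  | node l r hl hr =>
    rintro n ⟨m, rfl, hbl, hbr⟩
    simp [players, hl m hbl, hr m hbr, pow_succ]; ring

end SEBracket

variable {V : Type*} [DecidableEq V]

/-- There is a seeding of the player set `W` such that `x` wins the resulting
single-elimination tournament and every demand match of `S` with both endpoints in `W`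
is played. -/
def WinsPlayingDemands (A : V → V → Prop) [DecidableRel A] (S : Finset (V × V))
    (W : Finset V) (x : V) (p : ℕ) : Prop :=
  ∃ B : SEBracket V, B.balanced p ∧ B.players = W.val ∧ B.winner A = x ∧
    ∀ e ∈ S, e.1 ∈ W → e.2 ∈ W → e ∈ B.played A


lemma demand_aux (A : V → V → Prop) [DecidableRel A] (S : Finset (V × V))
    (W : Finset V) (l r : SEBracket V) (m : ℕ)
    (hbl : l.balanced m) (hbr : r.balanced m)
    (hpl : l.players + r.players = W.val)
    (hA : A (l.winner A) (r.winner A))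
    (hdem : ∀ e ∈ S, e.1 ∈ W → e.2 ∈ W →
      e ∈ insert (l.winner A, r.winner A) (l.played A ∪ r.played A)) :
    ∃ (W₁ W₂ : Finset V) (y : V),
      W₁ ∪ W₂ = W ∧ Disjoint W₁ W₂ ∧
      W₁.card = 2 ^ m ∧ W₂.card = 2 ^ m ∧
      l.winner A ∈ W₁ ∧ y ∈ W₂ ∧
      WinsPlayingDemands A S W₁ (l.winner A) m ∧
      WinsPlayingDemands A S W₂ y m ∧
      A (l.winner A) y ∧
      (∀ e ∈ S, ((e.1 ∈ W₁ ∧ e.2 ∈ W₂) ∨ (e.1 ∈ W₂ ∧ e.2 ∈ W₁)) → e = (l.winner A, y)) := by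
  have hnd : (l.players + r.players).Nodup := hpl ▸ W.nodup
  rw [Multiset.nodup_add] at hnd
  obtain ⟨ndl, ndr, hdisj0⟩ := hnd
  have hdisj : ∀ ⦃v : V⦄, v ∈ l.players → v ∈ r.players → False :=
    fun v h1 h2 => Multiset.disjoint_left.mp hdisj0 h1 h2
  set F₁ : Finset V := ⟨l.players, ndl⟩ with hF₁
  set F₂ : Finset V := ⟨r.players, ndr⟩ with hF₂
  have hm1 : ∀ v : V, v ∈ F₁ ↔ v ∈ l.players := fun v => Iff.rfl
  have hm2 : ∀ v : V, v ∈ F₂ ↔ v ∈ r.players := fun v => Iff.rfl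
  have hunion : F₁ ∪ F₂ = W := by
    ext v
    rw [Finset.mem_union, hm1, hm2, ← Multiset.mem_add, hpl]
    exact Iff.rfl
  have hdisjF : Disjoint F₁ F₂ := Finset.disjoint_left.mpr (fun a ha hb => hdisj ha hb)
  have hsub1 : F₁ ⊆ W := hunion ▸ Finset.subset_union_left
  have hsub2 : F₂ ⊆ W := hunion ▸ Finset.subset_union_right
  have ha : l.winner A ∈ F₁ := SEBracket.winner_mem_players A l
  have hb : r.winner A ∈ F₂ := SEBracket.winner_mem_players A r
  refine ⟨F₁, F₂, r.winner A, hunion, hdisjF, SEBracket.card_players l m hbl,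
    SEBracket.card_players r m hbr, ha, hb, ?_, ?_, hA, ?_⟩
  · refine ⟨l, hbl, rfl, rfl, fun e he h1 h2 => ?_⟩
    rcases Finset.mem_insert.mp (hdem e he (hsub1 h1) (hsub1 h2)) with h | h
    · subst h
      exact absurd hb (fun hh => hdisj h2 hh)
    · rcases Finset.mem_union.mp h with h | h
      · exact h
      · exact absurd ((SEBracket.played_mem A r e h).1) (fun hh => hdisj h1 hh)
  · refine ⟨r, hbr, rfl, rfl, fun e he h1 h2 => ?_⟩
    rcases Finset.mem_insert.mp (hdem e he (hsub2 h1) (hsub2 h2)) with h | h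
    · subst h
      exact absurd h1 (fun hh => hdisj ha hh)
    · rcases Finset.mem_union.mp h with h | h
      · exact absurd ((SEBracket.played_mem A l e h).1) (fun hh => hdisj hh h1)
      · exact h
  · intro e he hcr
    have h1W : e.1 ∈ W := by
      rcases hcr with ⟨h1, _⟩ | ⟨h1, _⟩
      · exact hsub1 h1
      · exact hsub2 h1
    have h2W : e.2 ∈ W := by
      rcases hcr with ⟨_, h2⟩ | ⟨_, h2⟩
      · exact hsub2 h2
      · exact hsub1 h2
    rcases Finset.mem_insert.mp (hdem e he h1W h2W) with h | h
    · exact h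
    · exfalso
      rcases Finset.mem_union.mp h with h | h
      · have := SEBracket.played_mem A l e h
        rcases hcr with ⟨_, h2⟩ | ⟨h1, _⟩
        · exact hdisj this.2 ((hm2 _).mp h2)
        · exact hdisj this.1 ((hm2 _).mp h1)
      · have := SEBracket.played_mem A r e h
        rcases hcr with ⟨h1, _⟩ | ⟨_, h2⟩
        · exact hdisj ((hm1 _).mp h1) this.1
        · exact hdisj ((hm1 _).mp h2) this.2

/-- Dynamic programming recurrence for Demand-TF: for `|W| = 2 ^ p`, `p > 0`, `x ∈ W`,
there is a seeding of `W` won by `x` playing every demand match inside `W` iff `W`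
splits into halves `W₁ ∋ x` and `W₂`, with a vertex `y ∈ W₂`, such that `x` wins a
seeding of `W₁` playing all demands inside `W₁`, `y` wins a seeding of `W₂` playing all
demands inside `W₂`, `x` beats `y`, and the only demand arc crossing between `W₁` and
`W₂` (if any) is `(x, y)`. -/
theorem demand_tf_recurrence (A : V → V → Prop) [DecidableRel A]
    (hasym : ∀ a b : V, A a b → ¬ A b a)
    (htotal : ∀ a b : V, a ≠ b → A a b ∨ A b a)
    (S : Finset (V × V)) (hS : ∀ e ∈ S, A e.1 e.2)
    (W : Finset V) (p : ℕ) (hp : 0 < p) (hW : W.card = 2 ^ p) (x : V) (hx : x ∈ W) :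
    WinsPlayingDemands A S W x p ↔
      ∃ (W₁ W₂ : Finset V) (y : V),
        W₁ ∪ W₂ = W ∧ Disjoint W₁ W₂ ∧
        W₁.card = 2 ^ (p - 1) ∧ W₂.card = 2 ^ (p - 1) ∧
        x ∈ W₁ ∧ y ∈ W₂ ∧
        WinsPlayingDemands A S W₁ x (p - 1) ∧
        WinsPlayingDemands A S W₂ y (p - 1) ∧
        A x y ∧
        (∀ e ∈ S, ((e.1 ∈ W₁ ∧ e.2 ∈ W₂) ∨ (e.1 ∈ W₂ ∧ e.2 ∈ W₁)) → e = (x, y)) := by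
  constructor
  · rintro ⟨B, hbal, hpl, hwin, hdem⟩
    cases B with
    | leaf v =>
      exfalso
      have : p = 0 := hbal
      omega
    | node l r =>
      obtain ⟨m, hm, hbl, hbr⟩ := hbal
      have hm' : p - 1 = m := by omega
      subst hm'
      rw [SEBracket.players] at hpl
      have hanb : l.winner A ≠ r.winner A := by
        intro h
        have hnd : (l.players + r.players).Nodup := hpl ▸ W.nodup
        rw [Multiset.nodup_add] at hnd
        exact Multiset.disjoint_left.mp hnd.2.2 (SEBracket.winner_mem_players A l)
          (h ▸ SEBracket.winner_mem_players A r)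
      have hw : (if A (l.winner A) (r.winner A) then l.winner A else r.winner A) = x := hwin
      by_cases hA : A (l.winner A) (r.winner A)
      · rw [if_pos hA] at hw
        subst hw
        have hdem' : ∀ e ∈ S, e.1 ∈ W → e.2 ∈ W →
            e ∈ insert (l.winner A, r.winner A) (l.played A ∪ r.played A) := by
          intro e he h1 h2
          have h3 := hdem e he h1 h2
          rw [SEBracket.played] at h3
          simpa [hA] using h3
        exact demand_aux A S W l r (p - 1) hbl hbr hpl hA hdem'
      · rw [if_neg hA] at hw
        subst hw
        have hba : A (r.winner A) (l.winner A) := (htotal _ _ hanb).resolve_left hA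
        have hdem' : ∀ e ∈ S, e.1 ∈ W → e.2 ∈ W →
            e ∈ insert (r.winner A, l.winner A) (r.played A ∪ l.played A) := by
          intro e he h1 h2
          have h3 := hdem e he h1 h2
          rw [SEBracket.played] at h3
          simp only [if_neg hA] at h3
          simpa [Finset.union_comm] using h3
        exact demand_aux A S W r l (p - 1) hbr hbl (by rwa [add_comm]) hba hdem'
  · rintro ⟨W₁, W₂, y, hun, hdisj, hc1, hc2, hx1, hy2, ⟨B₁, hb1, hp1, hw1, hd1⟩,
      ⟨B₂, hb2, hp2, hw2, hd2⟩, hxy, hcross⟩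
    refine ⟨.node B₁ B₂, ⟨p - 1, by omega, hb1, hb2⟩, ?_, ?_, ?_⟩
    · rw [SEBracket.players, hp1, hp2]
      show (W₁.disjUnion W₂ hdisj).val = W.val
      rw [Finset.disjUnion_eq_union, hun]
    · show (if A (B₁.winner A) (B₂.winner A) then B₁.winner A else B₂.winner A) = x
      rw [hw1, hw2, if_pos hxy]
    · intro e he h1 h2
      show e ∈ insert (if A (B₁.winner A) (B₂.winner A)
        then (B₁.winner A, B₂.winner A) else (B₂.winner A, B₁.winner A))
        (B₁.played A ∪ B₂.played A)
      rw [hw1, hw2, if_pos hxy]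
      have h1' : e.1 ∈ W₁ ∨ e.1 ∈ W₂ := by
        rw [← hun] at h1; exact Finset.mem_union.mp h1
      have h2' : e.2 ∈ W₁ ∨ e.2 ∈ W₂ := by
        rw [← hun] at h2; exact Finset.mem_union.mp h2
      rcases h1' with h1' | h1' <;> rcases h2' with h2' | h2'
      · exact Finset.mem_insert.mpr (Or.inr (Finset.mem_union_left _ (hd1 e he h1' h2')))
      · exact Finset.mem_insert.mpr (Or.inl (hcross e he (Or.inl ⟨h1', h2'⟩)))
      · exact Finset.mem_insert.mpr (Or.inl (hcross e he (Or.inr ⟨h1', h2'⟩)))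
      · exact Finset.mem_insert.mpr (Or.inr (Finset.mem_union_right _ (hd2 e he h1' h2')))
end

section
/- Exchange at the tree level: Let H be a binomial arborescence containing vertices u, v, w where u is the parent of both v and w, α_H(w) < α_H(v), and let T_w be the subtree rooted at w and T_0, ..., T_ℓ the subtrees rooted at the children of v of heights α_H(w), ..., α_H(v)-1 respectively. Then (ignoring which player beats which) the trees T_w, T_0, ..., T_ℓ can be combined by adding ℓ+1 arcs among their roots into a single binomial arborescence of height α_H(v), and detaching T_0,...,T_ℓ from v leaves v rooting a binomial arborescence of height α_H(w). -/
/-!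
The root of a binomial arborescence of height `h` has exactly one child of each height
`0, …, h - 1`, the subtrees of these children partition the remaining vertices, and every
subtree of a binomial arborescence is again one. Conversely, a tree of height `k` joined, by arcs
from its root, to disjoint trees of heights `k, k + 1, …, m - 1` in turn is a binomial
arborescence of height `m`. Starting from `T_w` and joining the subtrees of the children of `v`
of heights `α_H(w), …, α_H(v) - 1` gives a tree of height `α_H(v)`; starting from the single
vertex `v` and joining the subtrees of its remaining children, of heights `0, …, α_H(w) - 1`,
gives back what is left below `v`, a tree of height `α_H(w)`.
-/

universe u

variable {V : Type*} [DecidableEq V]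

/-- A binomial arborescence over relation `A`, recorded with its vertex set,
its arc set, its root and its height. -/
inductive IsBAE (A : V → V → Prop) : Finset V → Finset (V × V) → V → ℕ → Prop
  | single (a : V) : IsBAE A {a} ∅ a 0
  | join {s t : Finset V} {E F : Finset (V × V)} {a b : V} {i : ℕ} :
      IsBAE A s E a i → IsBAE A t F b i → Disjoint s t → A a b →
      IsBAE A (s ∪ t) (insert (a, b) (E ∪ F)) a (i + 1)

/-- Classical filter on a finset (no decidability assumptions needed). -/
noncomputable def cfilter {α : Type*} (p : α → Prop) (s : Finset α) : Finset α :=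
  @Finset.filter _ p (fun _ => Classical.dec _) s

/-- The descendants (inside ambient vertex set `s`) of `x` in the digraph with arc set `E`:
vertices reachable from `x`, including `x` itself (when `x ∈ s`). -/
noncomputable def desc (s : Finset V) (E : Finset (V × V)) (x : V) : Finset V :=
  cfilter (fun y => Relation.ReflTransGen (fun a b => (a, b) ∈ E) x y) s

/-- The height `α_H(x)` of a vertex: log base 2 of its number of descendants. -/
noncomputable def hgt (s : Finset V) (E : Finset (V × V)) (x : V) : ℕ :=
  Nat.log 2 (desc s E x).card

/-- The arcs of `E` lying within the subtree of descendants of `x`. -/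
noncomputable def subArcs (s : Finset V) (E : Finset (V × V)) (x : V) : Finset (V × V) :=
  cfilter (fun e => e.1 ∈ desc s E x ∧ e.2 ∈ desc s E x) E

section Descendants

open Finset

variable {α : Type*} {s t : Finset α} {E F : Finset (α × α)} {x y z : α}

lemma mem_cfilter {β : Type*} {p : β → Prop} {s : Finset β} {x : β} :
    x ∈ cfilter p s ↔ x ∈ s ∧ p x := by
  simp only [cfilter, mem_filter]

lemma mem_desc : y ∈ desc s E x ↔ y ∈ s ∧ Relation.ReflTransGen (fun a b => (a, b) ∈ E) x y :=
  mem_cfilter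

lemma desc_subset : desc s E x ⊆ s := fun _ hy => (mem_desc.1 hy).1

lemma self_mem_desc (hx : x ∈ s) : x ∈ desc s E x := mem_desc.2 ⟨hx, .refl⟩

lemma mem_desc_of_arc (hE : ∀ e ∈ E, e.2 ∈ s) (hy : y ∈ desc s E x) (hyz : (y, z) ∈ E) :
    z ∈ desc s E x :=
  mem_desc.2 ⟨hE _ hyz, (mem_desc.1 hy).2.tail hyz⟩

lemma desc_subset_desc (hy : y ∈ desc s E x) : desc s E y ⊆ desc s E x := fun _ hz =>
  mem_desc.2 ⟨(mem_desc.1 hz).1, (mem_desc.1 hy).2.trans (mem_desc.1 hz).2⟩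

lemma desc_mono (hts : t ⊆ s) (hFE : F ⊆ E) : desc t F x ⊆ desc s E x := fun _ hy =>
  mem_desc.2 ⟨hts (mem_desc.1 hy).1,
    Relation.ReflTransGen.mono (fun _ _ h => hFE h) _ _ (mem_desc.1 hy).2⟩

noncomputable def arcsIn (X : Finset α) (E : Finset (α × α)) : Finset (α × α) :=
  cfilter (fun e => e.1 ∈ X ∧ e.2 ∈ X) E

lemma mem_arcsIn {X : Finset α} {e : α × α} : e ∈ arcsIn X E ↔ e ∈ E ∧ e.1 ∈ X ∧ e.2 ∈ X :=
  mem_cfilter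

lemma subArcs_eq_arcsIn : subArcs s E x = arcsIn (desc s E x) E := rfl

lemma arcsIn_union [DecidableEq α] {X Y : Finset α} (hX : ∀ e ∈ E, e.1 ∈ X → e.2 ∈ X)
    (hY : ∀ e ∈ E, e.1 ∈ Y → e.2 ∈ Y) : arcsIn (X ∪ Y) E = arcsIn X E ∪ arcsIn Y E := by
  ext e
  simp only [mem_union, mem_arcsIn]
  constructor
  · rintro ⟨he, h1 | h1, -⟩
    exacts [Or.inl ⟨he, h1, hX e he h1⟩, Or.inr ⟨he, h1, hY e he h1⟩]
  · rintro (⟨he, h1, h2⟩ | ⟨he, h1, h2⟩)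
    exacts [⟨he, .inl h1, .inl h2⟩, ⟨he, .inr h1, .inr h2⟩]

lemma arcsIn_biUnion [DecidableEq α] {ι : Type*} {J : Finset ι} {X : ι → Finset α}
    (hX : ∀ j ∈ J, ∀ e ∈ E, e.1 ∈ X j → e.2 ∈ X j) :
    arcsIn (J.biUnion X) E = J.biUnion fun j => arcsIn (X j) E := by
  ext e
  simp only [mem_biUnion, mem_arcsIn]
  constructor
  · rintro ⟨he, ⟨j, hj, h1⟩, -⟩
    exact ⟨j, hj, he, h1, hX j hj e he h1⟩
  · rintro ⟨j, hj, he, h1, h2⟩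
    exact ⟨he, ⟨j, hj, h1⟩, ⟨j, hj, h2⟩⟩

/-- `(t, F)` is a subgraph of `(s, E)` in which `x` has the same subtree: it contains every arc
of `E` leaving a descendant of `x`. -/
structure CapturesSubtree (s : Finset α) (E : Finset (α × α)) (t : Finset α)
    (F : Finset (α × α)) (x : α) : Prop where
  mem : x ∈ t
  subset : t ⊆ s
  arcs_subset : F ⊆ E
  snd_mem : ∀ e ∈ F, e.2 ∈ t
  arc_mem_of_fst_mem : ∀ e ∈ E, e.1 ∈ desc t F x → e ∈ F

namespace CapturesSubtree

lemma desc_eq (h : CapturesSubtree s E t F x) : desc s E x = desc t F x := by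
  refine subset_antisymm (fun y hy => ?_) (desc_mono h.subset h.arcs_subset)
  obtain ⟨-, hxy⟩ := mem_desc.1 hy
  clear hy
  induction hxy with
  | refl => exact self_mem_desc h.mem
  | tail _ hstep ih => exact mem_desc_of_arc h.snd_mem ih (h.arc_mem_of_fst_mem _ hstep ih)

lemma hgt_eq (h : CapturesSubtree s E t F x) : hgt s E x = hgt t F x := by
  rw [hgt, hgt, h.desc_eq]

lemma subArcs_eq (h : CapturesSubtree s E t F x) : subArcs s E x = subArcs t F x := by
  ext e
  simp only [subArcs_eq_arcsIn, mem_arcsIn, h.desc_eq]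
  exact ⟨fun ⟨he, h1, h2⟩ => ⟨h.arc_mem_of_fst_mem e he h1, h1, h2⟩,
    fun ⟨he, h1, h2⟩ => ⟨h.arcs_subset he, h1, h2⟩⟩

lemma of_mem_desc (h : CapturesSubtree s E t F x) (hy : y ∈ desc t F x) :
    CapturesSubtree s E t F y where
  mem := desc_subset hy
  subset := h.subset
  arcs_subset := h.arcs_subset
  snd_mem := h.snd_mem
  arc_mem_of_fst_mem e he h1 := h.arc_mem_of_fst_mem e he (desc_subset_desc hy h1)

end CapturesSubtree

end Descendants

namespace IsBAE

open Finset

variable {α : Type*} [DecidableEq α] {A : α → α → Prop} {s t : Finset α}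
  {E F : Finset (α × α)} {a b x y : α} {n : ℕ}

lemma root_mem (h : IsBAE A s E a n) : a ∈ s := by
  induction h with
  | single => exact mem_singleton_self _
  | join _ _ _ _ ih => exact mem_union_left _ ih

lemma arc_mem (h : IsBAE A s E a n) : ∀ e ∈ E, e.1 ∈ s ∧ e.2 ∈ s := by
  induction h with
  | single => simp
  | join h1 h2 _ _ ih1 ih2 =>
    intro e he
    rcases mem_insert.1 he with rfl | he
    · exact ⟨mem_union_left _ h1.root_mem, mem_union_right _ h2.root_mem⟩
    rcases mem_union.1 he with he | he
    · exact (ih1 e he).imp (mem_union_left _) (mem_union_left _)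
    · exact (ih2 e he).imp (mem_union_right _) (mem_union_right _)

lemma card_eq (h : IsBAE A s E a n) : s.card = 2 ^ n := by
  induction h with
  | single => rfl
  | join _ _ hd _ ih1 ih2 => rw [card_union_of_disjoint hd, ih1, ih2, pow_succ, mul_two]

lemma no_arc_to_root (h : IsBAE A s E a n) (x : α) : (x, a) ∉ E := by
  induction h with
  | single => simp
  | join h1 h2 hd _ ih1 _ =>
    intro hx
    rcases mem_insert.1 hx with he | he
    · exact disjoint_left.1 hd h1.root_mem ((Prod.mk.inj he).2 ▸ h2.root_mem)
    rcases mem_union.1 he with he | he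
    · exact ih1 he
    · exact disjoint_left.1 hd h1.root_mem (h2.arc_mem _ he).2

lemma mono {B : α → α → Prop} (hAB : ∀ x y, A x y → B x y) (h : IsBAE A s E a n) :
    IsBAE B s E a n := by
  induction h with
  | single a => exact single a
  | join _ _ hd hA ih1 ih2 => exact join ih1 ih2 hd (hAB _ _ hA)

lemma desc_root (h : IsBAE A s E a n) : desc s E a = s := by
  refine subset_antisymm desc_subset ?_
  induction h with
  | single a => exact singleton_subset_iff.2 (self_mem_desc (mem_singleton_self a))
  | @join s t E F a b i h1 h2 hd hA ih1 ih2 =>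
    have hj := join h1 h2 hd hA
    have hE : E ⊆ insert (a, b) (E ∪ F) :=
      subset_union_left.trans (subset_insert _ _)
    have hF : F ⊆ insert (a, b) (E ∪ F) :=
      subset_union_right.trans (subset_insert _ _)
    have hb := mem_desc_of_arc (fun e he => (hj.arc_mem e he).2) (self_mem_desc hj.root_mem)
      (mem_insert_self _ _)
    exact union_subset (ih1.trans (desc_mono subset_union_left hE))
      (ih2.trans ((desc_mono subset_union_right hF).trans (desc_subset_desc hb)))

lemma hgt_root (h : IsBAE A s E a n) : hgt s E a = n := by
  rw [hgt, h.desc_root, h.card_eq, Nat.log_pow one_lt_two]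

lemma subArcs_root (h : IsBAE A s E a n) : subArcs s E a = E := by
  ext e
  rw [subArcs_eq_arcsIn, mem_arcsIn, h.desc_root]
  exact ⟨fun he => he.1, fun he => ⟨he, h.arc_mem e he⟩⟩

lemma root_not_mem_desc (h : IsBAE A s E a n) (hx : x ≠ a) : a ∉ desc s E x := by
  intro ha
  rcases (mem_desc.1 ha).2.cases_tail with rfl | ⟨y, -, hy⟩
  exacts [hx rfl, h.no_arc_to_root y hy]

lemma capturesSubtree_join_left (h1 : IsBAE A s E a n) (h2 : IsBAE A t F b n)
    (hd : Disjoint s t) (hx : x ∈ s) (hxa : x ≠ a) :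
    CapturesSubtree (s ∪ t) (insert (a, b) (E ∪ F)) s E x where
  mem := hx
  subset := subset_union_left
  arcs_subset := subset_union_left.trans (subset_insert _ _)
  snd_mem e he := (h1.arc_mem e he).2
  arc_mem_of_fst_mem e he hex := by
    rcases mem_insert.1 he with rfl | he
    · exact absurd hex (h1.root_not_mem_desc hxa)
    rcases mem_union.1 he with he | he
    · exact he
    · exact absurd (desc_subset hex) (disjoint_right.1 hd (h2.arc_mem e he).1)

lemma capturesSubtree_join_right (h1 : IsBAE A s E a n) (h2 : IsBAE A t F b n)
    (hd : Disjoint s t) (hx : x ∈ t) :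
    CapturesSubtree (s ∪ t) (insert (a, b) (E ∪ F)) t F x where
  mem := hx
  subset := subset_union_right
  arcs_subset := subset_union_right.trans (subset_insert _ _)
  snd_mem e he := (h2.arc_mem e he).2
  arc_mem_of_fst_mem e he hex := by
    have het := desc_subset hex
    rcases mem_insert.1 he with rfl | he
    · exact absurd het (disjoint_left.1 hd h1.root_mem)
    rcases mem_union.1 he with he | he
    · exact absurd het (disjoint_left.1 hd (h1.arc_mem e he).1)
    · exact he

lemma desc_join_of_arc (h1 : IsBAE A s E a n) (h2 : IsBAE A t F b n) (hd : Disjoint s t)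
    (hy : (a, y) ∈ E) : desc (s ∪ t) (insert (a, b) (E ∪ F)) y = desc s E y := by
  refine (h1.capturesSubtree_join_left h2 hd (x := y) (h1.arc_mem _ hy).2 ?_).desc_eq
  rintro rfl
  exact h1.no_arc_to_root _ hy

lemma desc_join_root_right (h1 : IsBAE A s E a n) (h2 : IsBAE A t F b n) (hd : Disjoint s t) :
    desc (s ∪ t) (insert (a, b) (E ∪ F)) b = t :=
  (h1.capturesSubtree_join_right h2 hd h2.root_mem).desc_eq.trans h2.desc_root

lemma subtree_root (h : IsBAE A s E a n) :
    IsBAE A (desc s E a) (subArcs s E a) a (hgt s E a) := by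
  rwa [h.desc_root, h.subArcs_root, h.hgt_root]

theorem subtree (h : IsBAE A s E a n) (hx : x ∈ s) :
    IsBAE A (desc s E x) (subArcs s E x) x (hgt s E x) := by
  induction h generalizing x with
  | single a =>
    obtain rfl := mem_singleton.1 hx
    exact (single (A := A) x).subtree_root
  | @join s t E F a b i h1 h2 hd hA ih1 ih2 =>
    by_cases hxa : x = a
    · subst hxa
      exact (join h1 h2 hd hA).subtree_root
    rcases mem_union.1 hx with hxs | hxt
    · have hc := h1.capturesSubtree_join_left h2 hd hxs hxa
      rw [hc.desc_eq, hc.subArcs_eq, hc.hgt_eq]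
      exact ih1 hxs
    · have hc := h1.capturesSubtree_join_right h2 hd hxt
      rw [hc.desc_eq, hc.subArcs_eq, hc.hgt_eq]
      exact ih2 hxt

theorem join_chain {k m : ℕ} {c : ℕ → α} {S : ℕ → Finset α} {G : ℕ → Finset (α × α)}
    (h : IsBAE A s E a k) (hkm : k ≤ m)
    (hS : ∀ i ∈ Ico k m, IsBAE A (S i) (G i) (c i) i)
    (hA : ∀ i ∈ Ico k m, A a (c i)) (hsS : ∀ i ∈ Ico k m, Disjoint s (S i))
    (hSS : (Ico k m : Set ℕ).PairwiseDisjoint S) :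
    IsBAE A (s ∪ (Ico k m).biUnion S)
      (E ∪ (Ico k m).biUnion G ∪ (Ico k m).image fun i => (a, c i)) a m := by
  induction m, hkm using Nat.le_induction with
  | base => simpa using h
  | succ m hkm ih =>
    have hIco : Ico k (m + 1) = insert m (Ico k m) :=
      Nat.Ico_succ_right_eq_insert_Ico hkm
    have hsub : Ico k m ⊆ Ico k (m + 1) := hIco ▸ subset_insert _ _
    have hm : m ∈ Ico k (m + 1) := hIco ▸ mem_insert_self _ _
    have hdisj : Disjoint (s ∪ (Ico k m).biUnion S) (S m) := by
      refine disjoint_union_left.2 ⟨hsS m hm, ?_⟩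
      refine (disjoint_biUnion_left _ _ _).2 fun i hi => hSS ?_ ?_ (mem_Ico.1 hi).2.ne
      exacts [mem_coe.2 (hsub hi), mem_coe.2 hm]
    have hjoin := (ih (fun i hi => hS i (hsub hi)) (fun i hi => hA i (hsub hi))
      (fun i hi => hsS i (hsub hi)) (hSS.subset (coe_subset.2 hsub))).join
      (hS m hm) hdisj (hA m hm)
    rw [hIco, biUnion_insert, biUnion_insert, image_insert]
    convert hjoin using 1 <;> ext <;> simp only [mem_union, mem_insert] <;> tauto

end IsBAE

section Children

open Finset

variable {α : Type*} [DecidableEq α] {A : α → α → Prop} {s t : Finset α}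
  {E F : Finset (α × α)} {a b x : α} {n : ℕ} {c : ℕ → α}

structure ChildEnum (s : Finset α) (E : Finset (α × α)) (x : α) (n : ℕ) (c : ℕ → α) :
    Prop where
  arc_mem : ∀ i < n, (x, c i) ∈ E
  hgt_eq : ∀ i < n, hgt s E (c i) = i
  exists_eq_of_arc : ∀ y, (x, y) ∈ E → ∃ i < n, y = c i
  pairwiseDisjoint : (range n : Set ℕ).PairwiseDisjoint fun i => desc s E (c i)
  not_mem_desc : ∀ i < n, x ∉ desc s E (c i)
  desc_eq : desc s E x = insert x ((range n).biUnion fun i => desc s E (c i))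

namespace ChildEnum

lemma desc_child_subset (hc : ChildEnum s E x n c) {i : ℕ} (hi : i < n) :
    desc s E (c i) ⊆ desc s E x := by
  rw [hc.desc_eq]
  exact (subset_biUnion_of_mem (fun j => desc s E (c j)) (mem_range.2 hi)).trans
    (subset_insert _ _)

lemma of_capturesSubtree (hc : ChildEnum t F x n c) (hcap : CapturesSubtree s E t F x) :
    ChildEnum s E x n c := by
  have hD : ∀ i < n, desc s E (c i) = desc t F (c i) := fun i hi =>
    (hcap.of_mem_desc (mem_desc_of_arc hcap.snd_mem (self_mem_desc hcap.mem)
      (hc.arc_mem i hi))).desc_eq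
  refine ⟨fun i hi => hcap.arcs_subset (hc.arc_mem i hi), fun i hi => ?_, fun y hy => ?_,
    ?_, fun i hi => ?_, ?_⟩
  · rw [hgt, hD i hi, ← hgt, hc.hgt_eq i hi]
  · exact hc.exists_eq_of_arc y (hcap.arc_mem_of_fst_mem _ hy (self_mem_desc hcap.mem))
  · exact hc.pairwiseDisjoint.mono_on fun i hi => (hD i (by simpa using hi)).le
  · rw [hD i hi]
    exact hc.not_mem_desc i hi
  · rw [hcap.desc_eq, hc.desc_eq, biUnion_congr rfl fun i hi => hD i (by simpa using hi)]

lemma join (hc : ChildEnum s E a n c) (h1 : IsBAE A s E a n) (h2 : IsBAE A t F b n)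
    (hd : Disjoint s t) (hA : A a b) :
    ChildEnum (s ∪ t) (insert (a, b) (E ∪ F)) a (n + 1) (Function.update c n b) := by
  have hupd : ∀ i < n, Function.update c n b i = c i := fun i hi =>
    Function.update_of_ne hi.ne _ _
  have hD : ∀ i < n, desc (s ∪ t) (insert (a, b) (E ∪ F)) (c i) = desc s E (c i) :=
    fun i hi => h1.desc_join_of_arc h2 hd (hc.arc_mem i hi)
  have hDb := h1.desc_join_root_right h2 hd
  have hat : a ∉ t := disjoint_left.1 hd h1.root_mem
  refine ⟨fun i hi => ?_, fun i hi => ?_, fun y hy => ?_, ?_, fun i hi => ?_, ?_⟩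
  · rcases Nat.lt_succ_iff_lt_or_eq.1 hi with hi | rfl
    · rw [hupd i hi]
      exact mem_insert_of_mem (mem_union_left _ (hc.arc_mem i hi))
    · rw [Function.update_self]
      exact mem_insert_self _ _
  · rcases Nat.lt_succ_iff_lt_or_eq.1 hi with hi | rfl
    · rw [hupd i hi, hgt, hD i hi, ← hgt, hc.hgt_eq i hi]
    · rw [Function.update_self, hgt, hDb, h2.card_eq, Nat.log_pow one_lt_two]
  · rcases mem_insert.1 hy with hy | hy
    · exact ⟨n, n.lt_succ_self, by rw [(Prod.mk.inj hy).2, Function.update_self]⟩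
    rcases mem_union.1 hy with hy | hy
    · obtain ⟨i, hi, rfl⟩ := hc.exists_eq_of_arc y hy
      exact ⟨i, Nat.lt_succ_of_lt hi, (hupd i hi).symm⟩
    · exact absurd (h2.arc_mem _ hy).1 hat
  · rw [range_add_one, coe_insert]
    refine Set.PairwiseDisjoint.insert ?_ fun j hj _ => ?_
    · exact hc.pairwiseDisjoint.mono_on fun i hi => by
        simp only [hupd i (by simpa using hi), hD i (by simpa using hi), le_rfl]
    · have hj : j < n := by simpa using hj
      rw [Function.update_self, hDb, hupd j hj, hD j hj]
      exact hd.symm.mono_right desc_subset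
  · rcases Nat.lt_succ_iff_lt_or_eq.1 hi with hi | rfl
    · rw [hupd i hi, hD i hi]
      exact hc.not_mem_desc i hi
    · rwa [Function.update_self, hDb]
  · have hrest : ((range n).biUnion fun i =>
        desc (s ∪ t) (insert (a, b) (E ∪ F)) (Function.update c n b i)) =
        (range n).biUnion fun i => desc s E (c i) :=
      biUnion_congr rfl fun i hi => by
        rw [hupd i (mem_range.1 hi), hD i (mem_range.1 hi)]
    rw [(IsBAE.join h1 h2 hd hA).desc_root, range_add_one, biUnion_insert,
      Function.update_self, hDb, hrest]
    conv_lhs => rw [← h1.desc_root, hc.desc_eq]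
    rw [insert_union, union_comm]

end ChildEnum

theorem IsBAE.exists_childEnum (h : IsBAE A s E a n) (hx : x ∈ s) :
    ∃ c, ChildEnum s E x (hgt s E x) c := by
  induction h generalizing x with
  | single a =>
    obtain rfl := mem_singleton.1 hx
    refine ⟨fun _ => x, ⟨?_, ?_, ?_, ?_, ?_, ?_⟩⟩ <;> simp [(IsBAE.single (A := A) x).hgt_root,
      (IsBAE.single (A := A) x).desc_root]
  | @join s t E F a b i h1 h2 hd hA ih1 ih2 =>
    by_cases hxa : x = a
    · subst hxa
      obtain ⟨c, hc⟩ := ih1 h1.root_mem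
      rw [h1.hgt_root] at hc
      exact ⟨_, (join h1 h2 hd hA).hgt_root ▸ hc.join h1 h2 hd hA⟩
    rcases mem_union.1 hx with hxs | hxt
    · have hcap := h1.capturesSubtree_join_left h2 hd hxs hxa
      obtain ⟨c, hc⟩ := ih1 hxs
      exact ⟨c, hcap.hgt_eq ▸ hc.of_capturesSubtree hcap⟩
    · have hcap := h1.capturesSubtree_join_right h2 hd hxt
      obtain ⟨c, hc⟩ := ih2 hxt
      exact ⟨c, hcap.hgt_eq ▸ hc.of_capturesSubtree hcap⟩

theorem IsBAE.disjoint_desc_of_arcs {u v w : α} (h : IsBAE A s E a n) (huv : (u, v) ∈ E)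
    (huw : (u, w) ∈ E) (hne : v ≠ w) :
    Disjoint (desc s E v) (desc s E w) := by
  obtain ⟨c, hc⟩ := h.exists_childEnum (h.arc_mem _ huv).1
  obtain ⟨i, hi, rfl⟩ := hc.exists_eq_of_arc v huv
  obtain ⟨j, hj, rfl⟩ := hc.exists_eq_of_arc w huw
  exact hc.pairwiseDisjoint (by simpa using hi) (by simpa using hj) (by rintro rfl; exact hne rfl)

end Children

section Exchange

open Finset

variable {α : Type*} [DecidableEq α] {A : α → α → Prop} {s : Finset α} {E : Finset (α × α)}
  {r v : α} {m n k : ℕ} {c : ℕ → α}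

namespace ChildEnum

lemma subtree (h : IsBAE A s E r m) (hc : ChildEnum s E v n c) {i : ℕ} (hi : i < n) :
    IsBAE A (desc s E (c i)) (subArcs s E (c i)) (c i) i := by
  have := h.subtree (x := c i) (h.arc_mem _ (hc.arc_mem i hi)).2
  rwa [hc.hgt_eq i hi] at this

lemma cfilter_exists_child_eq_biUnion (hc : ChildEnum s E v n c) (k : ℕ) :
    cfilter (fun x => ∃ b, (v, b) ∈ E ∧ k ≤ hgt s E b ∧ x ∈ desc s E b) s =
      (Ico k n).biUnion fun i => desc s E (c i) := by
  ext x
  simp only [mem_cfilter, mem_biUnion, mem_Ico]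
  constructor
  · rintro ⟨-, b, hb, hkb, hx⟩
    obtain ⟨i, hi, rfl⟩ := hc.exists_eq_of_arc b hb
    exact ⟨i, ⟨hc.hgt_eq i hi ▸ hkb, hi⟩, hx⟩
  · rintro ⟨i, ⟨hki, hi⟩, hx⟩
    exact ⟨desc_subset hx, c i, hc.arc_mem i hi, (hc.hgt_eq i hi).symm ▸ hki, hx⟩

lemma desc_sdiff_biUnion_Ico (hc : ChildEnum s E v n c) (hk : k ≤ n) :
    desc s E v \ (Ico k n).biUnion (fun i => desc s E (c i)) =
      insert v ((range k).biUnion fun i => desc s E (c i)) := by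
  have hv : v ∉ (Ico k n).biUnion fun i => desc s E (c i) := by
    simpa using fun i _ hi => hc.not_mem_desc i hi
  have hdisj : Disjoint ((range k).biUnion fun i => desc s E (c i))
      ((Ico k n).biUnion fun i => desc s E (c i)) := by
    refine (disjoint_biUnion_left _ _ _).2 fun i hi =>
      (disjoint_biUnion_right _ _ _).2 fun j hj => hc.pairwiseDisjoint ?_ ?_ ?_
    all_goals simp only [mem_range, mem_Ico, coe_range, Set.mem_Iio] at *
    all_goals omega
  have hsplit : range n = range k ∪ Ico k n := by
    ext i
    simp only [mem_range, mem_union, mem_Ico]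
    omega
  rw [hc.desc_eq, insert_sdiff_of_notMem _ hv, hsplit, union_biUnion,
    union_sdiff_cancel_right hdisj]

lemma arcsIn_insert_biUnion_range (hc : ChildEnum s E v n c) (hE : ∀ e ∈ E, e.2 ∈ s)
    (hk : k ≤ n) :
    arcsIn (insert v ((range k).biUnion fun i => desc s E (c i))) E =
      (range k).biUnion (fun i => subArcs s E (c i)) ∪
        (range k).image fun i => (v, c i) := by
  have hcs : ∀ i < n, c i ∈ s := fun i hi => hE _ (hc.arc_mem i hi)
  ext ⟨p, q⟩
  simp only [mem_arcsIn, subArcs_eq_arcsIn, mem_insert, mem_biUnion,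
    mem_range, mem_union, mem_image, Prod.mk.injEq]
  constructor
  · rintro ⟨he, rfl | ⟨i, hi, hp⟩, hq⟩
    · obtain ⟨j, hj, rfl⟩ := hc.exists_eq_of_arc q he
      rcases hq with hq | ⟨i, hi, hq⟩
      · exact absurd (hq ▸ self_mem_desc (hcs j hj)) (hc.not_mem_desc j hj)
      · have hji : j = i := hc.pairwiseDisjoint.elim_finset (by simpa using hj)
          (by simpa using hi.trans_le hk) _ (self_mem_desc (hcs j hj)) hq
        exact Or.inr ⟨j, hji ▸ hi, rfl, rfl⟩
    · exact Or.inl ⟨i, hi, he, hp, mem_desc_of_arc hE hp he⟩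
  · rintro (⟨i, hi, he, hp, hq⟩ | ⟨i, hi, rfl, rfl⟩)
    · exact ⟨he, Or.inr ⟨i, hi, hp⟩, Or.inr ⟨i, hi, hq⟩⟩
    · exact ⟨hc.arc_mem i (hi.trans_le hk), Or.inl rfl,
        Or.inr ⟨i, hi, self_mem_desc (hcs i (hi.trans_le hk))⟩⟩

theorem isBAE_detach (h : IsBAE A s E r m) (hc : ChildEnum s E v n c) (hk : k ≤ n) :
    IsBAE (fun _ _ => True) (desc s E v \ (Ico k n).biUnion fun i => desc s E (c i))
      (arcsIn (desc s E v \ (Ico k n).biUnion fun i => desc s E (c i)) E) v k := by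
  have hE : ∀ e ∈ E, e.2 ∈ s := fun e he => (h.arc_mem e he).2
  have hlt : ∀ i ∈ Ico 0 k, i < n := fun i hi => (mem_Ico.1 hi).2.trans_le hk
  have hchain := (IsBAE.single (A := fun _ _ => True) v).join_chain (Nat.zero_le k) (c := c)
    (G := fun i => subArcs s E (c i))
    (fun i hi => (hc.subtree h (hlt i hi)).mono fun _ _ _ => trivial)
    (fun _ _ => trivial)
    (fun i hi => disjoint_singleton_left.2 (hc.not_mem_desc i (hlt i hi)))
    (hc.pairwiseDisjoint.subset fun i hi => by simpa using hlt i hi)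
  rw [hc.desc_sdiff_biUnion_Ico hk, hc.arcsIn_insert_biUnion_range hE hk]
  rwa [← range_eq_Ico, empty_union, ← insert_eq] at hchain

theorem isBAE_merge (h : IsBAE A s E r m) (hc : ChildEnum s E v n c) {w : α} (hw : w ∈ s)
    (hwv : Disjoint (desc s E w) (desc s E v)) (hk : hgt s E w ≤ n) :
    IsBAE (fun _ _ => True)
      (desc s E w ∪ (Ico (hgt s E w) n).biUnion fun i => desc s E (c i))
      (arcsIn (desc s E w ∪ (Ico (hgt s E w) n).biUnion fun i => desc s E (c i)) E ∪
        (Ico (hgt s E w) n).image fun i => (w, c i)) w n := by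
  have hE : ∀ e ∈ E, e.2 ∈ s := fun e he => (h.arc_mem e he).2
  have hclosed : ∀ x, ∀ e ∈ E, e.1 ∈ desc s E x → e.2 ∈ desc s E x :=
    fun x e he hex => mem_desc_of_arc hE hex he
  have hlt : ∀ i ∈ Ico (hgt s E w) n, i < n := fun i hi => (mem_Ico.1 hi).2
  rw [arcsIn_union (hclosed w), arcsIn_biUnion fun i _ => hclosed (c i)]
  · exact ((h.subtree hw).mono fun _ _ _ => trivial).join_chain hk
      (fun i hi => (hc.subtree h (hlt i hi)).mono fun _ _ _ => trivial)
      (fun _ _ => trivial)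
      (fun i hi => hwv.mono_right (hc.desc_child_subset (hlt i hi)))
      (hc.pairwiseDisjoint.subset fun i hi => by simpa using hlt i hi)
  · intro e he hex
    obtain ⟨i, hi, hex⟩ := mem_biUnion.1 hex
    exact mem_biUnion.2 ⟨i, hi, hclosed _ e he hex⟩

end ChildEnum

end Exchange

/-- Exchange at the tree level. Let `H` be a binomial arborescence with `u` the parent of
both `v` and `w` and `α_H(w) < α_H(v)`; let `T_w` be the subtree rooted at `w` and
`T_0, …, T_ℓ` the subtrees rooted at the children of `v` of heights
`α_H(w), …, α_H(v) - 1`. Then (ignoring which player beats which, i.e. over the trivial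
relation) the trees `T_w, T_0, …, T_ℓ` can be combined, by adding `ℓ + 1` arcs among
their roots, into a single binomial arborescence of height `α_H(v)`; and detaching
`T_0, …, T_ℓ` from `v` leaves `v` rooting a binomial arborescence of height `α_H(w)`. -/
theorem tree_level_exchange (A : V → V → Prop) (s : Finset V) (E : Finset (V × V))
    (r : V) (n : ℕ) (h : IsBAE A s E r n)
    (u v w : V) (huv : (u, v) ∈ E) (huw : (u, w) ∈ E) (hne : w ≠ v)
    (hlt : hgt s E w < hgt s E v)
    -- `HD` is the union of the vertex sets of the subtrees `T_0, …, T_ℓ` rooted at the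
    -- children of `v` of height at least `α_H(w)`:
    (HD : Finset V)
    (hHD : HD = cfilter
      (fun x => ∃ b : V, (v, b) ∈ E ∧ hgt s E w ≤ hgt s E b ∧ x ∈ desc s E b) s) :
    (∃ (Enew : Finset (V × V)) (ρ : V),
      -- the new arcs are among the roots of `T_w, T_0, …, T_ℓ` …
      (∀ e ∈ Enew,
        (e.1 = w ∨ ((v, e.1) ∈ E ∧ hgt s E w ≤ hgt s E e.1)) ∧
        (e.2 = w ∨ ((v, e.2) ∈ E ∧ hgt s E w ≤ hgt s E e.2))) ∧
      -- … there are `ℓ + 1 = α_H(v) - α_H(w)` of them …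
      Enew.card = hgt s E v - hgt s E w ∧
      -- … and together with the old arcs inside the trees they form a binomial
      -- arborescence of height `α_H(v)` on the union of the trees:
      IsBAE (fun _ _ => True) (desc s E w ∪ HD)
        ((cfilter (fun e => e.1 ∈ desc s E w ∪ HD ∧ e.2 ∈ desc s E w ∪ HD) E) ∪ Enew)
        ρ (hgt s E v)) ∧
    -- detaching `T_0, …, T_ℓ` leaves `v` rooting a binomial arborescence of height `α_H(w)`:
    IsBAE (fun _ _ => True) (desc s E v \ HD)
      (cfilter (fun e => e.1 ∈ desc s E v \ HD ∧ e.2 ∈ desc s E v \ HD) E)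
      v (hgt s E w) := by
  obtain ⟨c, hc⟩ := h.exists_childEnum (h.arc_mem _ huv).2
  rw [hc.cfilter_exists_child_eq_biUnion] at hHD
  subst hHD
  refine ⟨⟨(Finset.Ico (hgt s E w) (hgt s E v)).image fun i => (w, c i), w, ?_, ?_,
    hc.isBAE_merge h (h.arc_mem _ huw).2 (h.disjoint_desc_of_arcs huw huv hne) hlt.le⟩,
    hc.isBAE_detach h hlt.le⟩
  · simp only [Finset.mem_image, Finset.mem_Ico]
    rintro _ ⟨i, ⟨hwi, hi⟩, rfl⟩
    exact ⟨.inl rfl, .inr ⟨hc.arc_mem i hi, (hc.hgt_eq i hi).symm ▸ hwi⟩⟩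
  · rw [Finset.card_image_of_injOn, Nat.card_Ico]
    intro i hi j hj hij
    simp only [Finset.coe_Ico, Set.mem_Ico] at hi hj
    rw [← hc.hgt_eq i hi.2, ← hc.hgt_eq j hj.2, (Prod.mk.inj hij).2]
end
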